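/- Let φ be an automorphism of a finite group G, let S be a subgroup of G that is a TI-subgroup (S ∩ S^g = 1 for all g ∉ N_G(S)) and such that φ does not normalize S (i.e., S^φ ≠ S, viewing the action in the semidirect product G⟨φ⟩). Then for every nontrivial x ∈ S and every k ≥ 0, the iterated commutator [φ, _k x] (computed in G⟨φ⟩, with [φ, _0 x] := φ) does not lie in N_{G⟨φ⟩}(S). -/

import Mathlib

open scoped commutatorElement

/-- Iterated right Engel commutator `[φ, _{n+1} x]` of an automorphism `φ` with an
element `x`, computed in the semidirect product `G⟨φ⟩`: these all lie in `G`, with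
`rEngelAut φ x 0 = [φ, x] = φ⁻¹ x⁻¹ φ x = (x⁻¹)^{φ⁻¹} · x`. -/
def rEngelAut {G : Type} [Group G] (φ : MulAut G) (x : G) : ℕ → G
  | 0 => φ⁻¹ x⁻¹ * x
  | n + 1 => ⁅rEngelAut φ x n, x⁆

/-!
An `s`-element normalizing a Sylow `s`-subgroup lies in it. So if `[c, x]` normalized `S`, the
conjugate `c x c⁻¹` would lie in `S` and the TI property would force `c ∈ N(S)`; this reduces
everything to `k = 0`. There `φ⁻¹(x⁻¹)` lands in `S`, so `x⁻¹ ≠ 1` lies in both `S` and the Sylow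
subgroup `φ(S)`, and since `φ(S)` is conjugate to `S`, the TI property gives `φ(S) = S`.
-/

open scoped Pointwise

open Subgroup

/-- `H` is a TI-subgroup: two conjugates of `H` either coincide or meet trivially. -/
def Subgroup.IsTI {G : Type*} [Group G] (H : Subgroup G) : Prop :=
  ∀ g : G, (∃ y ∈ H, y ≠ 1 ∧ g⁻¹ * y * g ∈ H) → g ∈ normalizer (H : Set G)

namespace Sylow

variable {G : Type*} [Group G] {p : ℕ}

theorem isPGroup_zpowers_map {P : Sylow p G} {x : G} (hx : x ∈ (P : Subgroup G)) {K : Type*}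
    [Group K] (f : G →* K) : IsPGroup p (zpowers (f x)) := by
  rw [← MonoidHom.map_zpowers]
  exact (P.isPGroup'.to_le (zpowers_le.mpr hx)).map f

theorem mem_of_mem_normalizer {P : Sylow p G} {g : G} (hg : IsPGroup p (zpowers g))
    (hN : g ∈ normalizer ((P : Subgroup G) : Set G)) : g ∈ (P : Subgroup G) :=
  ((hg.inf_normalizer_sylow P).le ⟨mem_zpowers g, hN⟩).2

theorem mem_normalizer_of_conj_mem_normalizer {P : Sylow p G} (hP : (P : Subgroup G).IsTI)
    {x g : G} (hx : x ∈ (P : Subgroup G)) (hx1 : x ≠ 1)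
    (h : g * x * g⁻¹ ∈ normalizer ((P : Subgroup G) : Set G)) :
    g ∈ normalizer ((P : Subgroup G) : Set G) := by
  have hconj : g * x * g⁻¹ ∈ (P : Subgroup G) :=
    mem_of_mem_normalizer (isPGroup_zpowers_map hx (MulAut.conj g).toMonoidHom) h
  refine hP g ⟨g * x * g⁻¹, hconj, by rwa [Ne, conj_eq_one_iff], ?_⟩
  rwa [show g⁻¹ * (g * x * g⁻¹) * g = x by group]

theorem eq_of_mem_of_isTI [Fact p.Prime] [Finite (Sylow p G)] {P Q : Sylow p G}
    (hP : (P : Subgroup G).IsTI) {y : G} (hyP : y ∈ (P : Subgroup G))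
    (hyQ : y ∈ (Q : Subgroup G)) (hy : y ≠ 1) : Q = P := by
  obtain ⟨g, rfl⟩ := MulAction.exists_smul_eq G P Q
  rw [coe_subgroup_smul, mem_pointwise_smul_iff_inv_smul_mem] at hyQ
  exact smul_eq_iff_mem_normalizer.mpr (hP g ⟨y, hyP, hy, by simpa [MulAut.smul_def] using hyQ⟩)

theorem smul_eq_of_inv_apply_mem_normalizer [Fact p.Prime] [Finite (Sylow p G)] {P : Sylow p G}
    (hP : (P : Subgroup G).IsTI) {ψ : MulAut G} {y : G} (hy : y ∈ (P : Subgroup G)) (hy1 : y ≠ 1)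
    (h : ψ⁻¹ y ∈ normalizer ((P : Subgroup G) : Set G)) : ψ • P = P := by
  have hψy : ψ⁻¹ y ∈ (P : Subgroup G) :=
    mem_of_mem_normalizer (isPGroup_zpowers_map hy (ψ⁻¹ : MulAut G).toMonoidHom) h
  refine eq_of_mem_of_isTI hP hy ?_ hy1
  rwa [pointwise_smul_def, mem_pointwise_smul_iff_inv_smul_mem]

end Sylow

theorem stmt10 (G : Type) [Group G] [Finite G] (s : ℕ) (hs : s.Prime)
    (S : Sylow s G)
    (hTI : ∀ g : G, (∃ y ∈ (S : Subgroup G), y ≠ 1 ∧ g⁻¹ * y * g ∈ (S : Subgroup G)) →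
      g ∈ Subgroup.normalizer ((S : Subgroup G) : Set G))
    (φ : MulAut G) (hφ : Subgroup.map φ.toMonoidHom (S : Subgroup G) ≠ (S : Subgroup G)) :
    ∀ x ∈ (S : Subgroup G), x ≠ 1 → ∀ k : ℕ,
      rEngelAut φ x k ∉ Subgroup.normalizer ((S : Subgroup G) : Set G) := by
  have : Fact s.Prime := ⟨hs⟩
  intro x hx hx1 k
  induction k with
  | zero =>
    intro h
    have hφS : φ • S = S := S.smul_eq_of_inv_apply_mem_normalizer hTI (inv_mem hx)
      (inv_ne_one.mpr hx1) (by
        simpa only [rEngelAut, mul_inv_cancel_right] using mul_mem h (inv_mem (le_normalizer hx)))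
    exact hφ (congrArg Sylow.toSubgroup hφS)
  | succ n ih =>
    intro h
    refine ih (S.mem_normalizer_of_conj_mem_normalizer hTI hx hx1 ?_)
    simpa [rEngelAut, commutatorElement_def] using mul_mem h (le_normalizer hx)
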